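/- Let η be a ±1-valued event sequence on [0,T], let p ∈ {(+−), (−+)}, and let n ∈ ℕ. Then every event sequence η′ obtained from η by n successive p-transcription steps satisfies ‖η′‖_D ≤ ‖η‖_D. -/
import Mathlib


open Set Function Filter Classical

/-- The next SOD sampling time after time `s` for input `f`, threshold `θ`, on `[0,T]`:
the infimum of `{t ∈ (s,T] : |f t - f s| ≥ θ}` if this set is nonempty, `none` otherwise. -/
noncomputable def sodNext (T θ : ℝ) (f : ℝ → ℝ) (s : ℝ) : Option ℝ :=
  if (∃ t ∈ Set.Ioc s T, θ ≤ |f t - f s|) then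
    some (sInf {t | t ∈ Set.Ioc s T ∧ θ ≤ |f t - f s|})
  else none

/-- The `k`-th SOD sampling time (`t_0 = 0`), `none` if the recursion has stopped before `k`. -/
noncomputable def sodTime (T θ : ℝ) (f : ℝ → ℝ) : ℕ → Option ℝ
  | 0 => some 0
  | n + 1 => (sodTime T θ f n).bind (sodNext T θ f)

/-- The SOD output event sequence `Φ_θ(f)` : it takes the value `f t_k - f t_{k-1}` at
each sampling time `t_k`, `k ≥ 1`, and `0` elsewhere. -/
noncomputable def sodOut (T θ : ℝ) (f : ℝ → ℝ) : ℝ → ℝ := fun t =>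
  if h : ∃ k : ℕ, ∃ s : ℝ, sodTime T θ f k = some s ∧ sodNext T θ f s = some t
  then f t - f h.choose_spec.choose
  else 0

/-- Membership in `F[0,T]`: continuous on `[0,T]` with `f 0 = 0`. -/
def memF (T : ℝ) (f : ℝ → ℝ) : Prop :=
  ContinuousOn f (Set.Icc 0 T) ∧ f 0 = 0

/-- An event sequence on `[0,T]`: finitely supported with support in `[0,T]`. -/
def IsEventSeq (T : ℝ) (η : ℝ → ℝ) : Prop :=
  (Function.support η).Finite ∧ Function.support η ⊆ Set.Icc 0 T

/-- `η` is `±1`-valued on its support. -/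
def IsPM (η : ℝ → ℝ) : Prop :=
  ∀ t ∈ Function.support η, η t = 1 ∨ η t = -1

/-- Weyl's discrepancy norm `‖η‖_D = sup_{0 ≤ a ≤ b ≤ T} |Σ_{t ∈ [a,b]} η t|`. -/
noncomputable def discNorm (T : ℝ) (η : ℝ → ℝ) : ℝ :=
  sSup {x | ∃ a b : ℝ, 0 ≤ a ∧ a ≤ b ∧ b ≤ T ∧ x = |∑ᶠ t ∈ Set.Icc a b, η t|}

/-- Alexiewicz norm `‖η‖_A = sup_{a ∈ [0,T]} |Σ_{t ∈ [0,a]} η t|`. -/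
noncomputable def alexNorm (T : ℝ) (η : ℝ → ℝ) : ℝ :=
  sSup {x | ∃ a : ℝ, 0 ≤ a ∧ a ≤ T ∧ x = |∑ᶠ t ∈ Set.Icc 0 a, η t|}

/-- The values of `η` at consecutive support points alternate in sign. -/
def Alternating (η : ℝ → ℝ) : Prop :=
  ∀ s u : ℝ, s ∈ Function.support η → u ∈ Function.support η → s < u →
    (∀ t ∈ Function.support η, ¬ (s < t ∧ t < u)) → η s * η u < 0

/-- One `(+−)`-transcription step: erase a `+1` followed (with no support in between) by a `−1`. -/
def StepPM (η η' : ℝ → ℝ) : Prop :=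
  ∃ s u : ℝ, s < u ∧ η s = 1 ∧ η u = -1 ∧ (∀ t : ℝ, s < t → t < u → η t = 0) ∧
    η' = Function.update (Function.update η s 0) u 0

/-- One `(−+)`-transcription step: erase a `−1` followed (with no support in between) by a `+1`. -/
def StepMP (η η' : ℝ → ℝ) : Prop :=
  ∃ s u : ℝ, s < u ∧ η s = -1 ∧ η u = 1 ∧ (∀ t : ℝ, s < t → t < u → η t = 0) ∧
    η' = Function.update (Function.update η s 0) u 0

/-- `StepsN R n x y` : `y` is obtained from `x` by `n` successive `R`-steps. -/
def StepsN (R : (ℝ → ℝ) → (ℝ → ℝ) → Prop) : ℕ → (ℝ → ℝ) → (ℝ → ℝ) → Prop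
  | 0, x, y => x = y
  | n + 1, x, z => ∃ y, R x y ∧ StepsN R n y z

/-- Uniform distance `‖f − g‖_∞` over `[0,T]`. -/
noncomputable def unifDist (T : ℝ) (f g : ℝ → ℝ) : ℝ :=
  sSup {x | ∃ t ∈ Set.Icc 0 T, x = |f t - g t|}

private lemma finsum_Icc_eq_sum_filter {η : ℝ → ℝ} (h : (Function.support η).Finite) (a b : ℝ) :
    ∑ᶠ t ∈ Set.Icc a b, η t
      = ∑ t ∈ h.toFinset.filter (fun t => t ∈ Set.Icc a b), η t := by
  rw [finsum_mem_eq_sum η (h.inter_of_right (Set.Icc a b))]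
  apply Finset.sum_congr _ (fun _ _ => rfl)
  ext t
  simp only [Set.Finite.mem_toFinset, Set.mem_inter_iff, Finset.mem_filter,
    Function.mem_support]
  tauto

private lemma finsum_Icc_eq_sum_filter' {η η' : ℝ → ℝ} (h : (Function.support η).Finite)
    (hsub : Function.support η' ⊆ Function.support η) (a b : ℝ) :
    ∑ᶠ t ∈ Set.Icc a b, η' t
      = ∑ t ∈ h.toFinset.filter (fun t => t ∈ Set.Icc a b), η' t := by
  rw [finsum_Icc_eq_sum_filter (h.subset hsub)]
  apply Finset.sum_subset
  · intro t ht
    simp only [Finset.mem_filter, Set.Finite.mem_toFinset] at *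
    exact ⟨hsub ht.1, ht.2⟩
  · intro t htG ht
    by_contra hne
    apply ht
    simp only [Finset.mem_filter, Set.Finite.mem_toFinset, Function.mem_support] at *
    exact ⟨hne, htG.2⟩

private lemma discNorm_set_bddAbove {T : ℝ} {η : ℝ → ℝ} (h : (Function.support η).Finite) :
    BddAbove {x | ∃ a b : ℝ, 0 ≤ a ∧ a ≤ b ∧ b ≤ T ∧ x = |∑ᶠ t ∈ Set.Icc a b, η t|} := by
  refine ⟨∑ t ∈ h.toFinset, |η t|, ?_⟩
  rintro x ⟨a, b, -, -, -, rfl⟩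
  rw [finsum_Icc_eq_sum_filter h]
  calc |∑ t ∈ _, η t| ≤ ∑ t ∈ h.toFinset.filter (fun t => t ∈ Set.Icc a b), |η t| :=
        Finset.abs_sum_le_sum_abs _ _
    _ ≤ ∑ t ∈ h.toFinset, |η t| :=
        Finset.sum_le_sum_of_subset_of_nonneg (Finset.filter_subset _ _)
          (fun _ _ _ => abs_nonneg _)

private lemma abs_finsum_le_discNorm {T : ℝ} {η : ℝ → ℝ} (h : (Function.support η).Finite)
    {a b : ℝ} (ha : 0 ≤ a) (hab : a ≤ b) (hbT : b ≤ T) :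
    |∑ᶠ t ∈ Set.Icc a b, η t| ≤ discNorm T η :=
  le_csSup (discNorm_set_bddAbove h) ⟨a, b, ha, hab, hbT, rfl⟩

private lemma discNorm_nonneg' {T : ℝ} {η : ℝ → ℝ} (hT : 0 ≤ T)
    (h : (Function.support η).Finite) : 0 ≤ discNorm T η :=
  le_trans (abs_nonneg _) (abs_finsum_le_discNorm h le_rfl le_rfl hT)

private lemma step_support_subset {η : ℝ → ℝ} (s u : ℝ) :
    Function.support (Function.update (Function.update η s 0) u 0) ⊆ Function.support η := by
  intro t ht
  simp only [Function.mem_support, Function.update_apply] at *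
  split_ifs at ht <;> simp_all

private lemma step_discNorm_le {T : ℝ} (hT : 0 ≤ T) {η : ℝ → ℝ}
    (hη : IsEventSeq T η) {s u : ℝ} (hsu : s < u) (hsum : η s + η u = 0)
    (hs0 : η s ≠ 0) (hu0 : η u ≠ 0) (hmid : ∀ t, s < t → t < u → η t = 0) :
    discNorm T (Function.update (Function.update η s 0) u 0) ≤ discNorm T η := by
  obtain ⟨hfin, hsub⟩ := hη
  set η' : ℝ → ℝ := Function.update (Function.update η s 0) u 0 with hη'
  have hsubs := step_support_subset (η := η) s u
  have hsmem : s ∈ Set.Icc (0:ℝ) T := hsub hs0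
  have humem : u ∈ Set.Icc (0:ℝ) T := hsub hu0
  apply Real.sSup_le _ (discNorm_nonneg' hT hfin)
  rintro x ⟨a, b, ha, hab, hbT, rfl⟩
  rw [finsum_Icc_eq_sum_filter' hfin hsubs]
  set G := hfin.toFinset.filter (fun t => t ∈ Set.Icc a b) with hG
  have hGmem : ∀ t, t ∈ G ↔ (η t ≠ 0 ∧ a ≤ t ∧ t ≤ b) := by
    intro t
    simp [hG, Set.Finite.mem_toFinset, Function.mem_support, Set.mem_Icc, and_assoc]
  have hne : s ≠ u := ne_of_lt hsu
  have hη'eq : ∀ t, t ≠ s → t ≠ u → η' t = η t := by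
    intro t h1 h2
    simp [hη', Function.update_apply, h1, h2]
  by_cases hsG : s ∈ G <;> by_cases huG : u ∈ G
  · -- both erased inside the interval: sums are equal
    have e1 : ∑ t ∈ G, η' t = ∑ t ∈ (G \ {u}) \ {s}, η t := by
      rw [hη', Finset.sum_update_of_mem huG,
        Finset.sum_update_of_mem (by simp [Finset.mem_sdiff, hsG, hne])]
      ring
    have e2 : ∑ t ∈ G, η t = ∑ t ∈ (G \ {u}) \ {s}, η t + (η s + η u) := by
      have h2 : ∑ t ∈ G, η t = η u + ∑ t ∈ G \ {u}, η t := by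
        rw [← Finset.sum_update_of_mem huG]
        exact Finset.sum_congr rfl (fun t ht => by
          by_cases h : t = u <;> simp [Function.update_apply, h])
      have h3 : ∑ t ∈ G \ {u}, η t = η s + ∑ t ∈ (G \ {u}) \ {s}, η t := by
        rw [← Finset.sum_update_of_mem (by simp [Finset.mem_sdiff, hsG, hne])]
        exact Finset.sum_congr rfl (fun t ht => by
          by_cases h : t = s <;> simp [Function.update_apply, h])
      rw [h2, h3]; ring
    rw [e1]
    have : ∑ t ∈ (G \ {u}) \ {s}, η t = ∑ᶠ t ∈ Set.Icc a b, η t := by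
      rw [finsum_Icc_eq_sum_filter hfin, ← hG, e2, hsum, add_zero]
    rw [this]
    exact abs_finsum_le_discNorm hfin ha hab hbT
  · -- s in the interval, u after it
    have hbu : b < u := by
      by_contra hc
      exact huG ((hGmem u).2 ⟨hu0, le_trans ((hGmem s).1 hsG).2.1 hsu.le,
        not_lt.mp hc⟩)
    have e1 : ∑ t ∈ G, η' t = ∑ t ∈ G \ {s}, η t := by
      rw [hη']
      have : ∑ t ∈ G, Function.update (Function.update η s 0) u 0 t
          = ∑ t ∈ G, Function.update η s 0 t :=
        Finset.sum_congr rfl (fun t ht => by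
          have : t ≠ u := fun h => huG (h ▸ ht)
          simp [Function.update_apply, this])
      rw [this, Finset.sum_update_of_mem hsG, zero_add]
    rw [e1]
    have hlt : ∀ t ∈ G \ {s}, a ≤ t ∧ t < s := by
      intro t ht
      rw [Finset.mem_sdiff, Finset.mem_singleton] at ht
      obtain ⟨htG, hts⟩ := ht
      obtain ⟨ht0, hta, htb⟩ := (hGmem t).1 htG
      refine ⟨hta, ?_⟩
      rcases lt_trichotomy t s with h | h | h
      · exact h
      · exact absurd h hts
      · exact absurd (hmid t h (lt_of_le_of_lt htb hbu)) ht0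
    rcases Finset.eq_empty_or_nonempty (G \ {s}) with hemp | hnemp
    · rw [hemp, Finset.sum_empty, abs_zero]
      exact discNorm_nonneg' hT hfin
    · set c := (G \ {s}).max' hnemp with hc
      have hcmem := (G \ {s}).max'_mem hnemp
      have hcs : a ≤ c ∧ c < s := hlt c hcmem
      have : G \ {s} = hfin.toFinset.filter (fun t => t ∈ Set.Icc a c) := by
        ext t
        simp only [Finset.mem_filter, Set.Finite.mem_toFinset, Function.mem_support,
          Set.mem_Icc]
        constructor
        · intro ht
          exact ⟨((hGmem t).1 (Finset.mem_sdiff.mp ht).1).1, (hlt t ht).1,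
            Finset.le_max' _ t ht⟩
        · rintro ⟨ht0, hta, htc⟩
          rw [Finset.mem_sdiff, Finset.mem_singleton]
          exact ⟨(hGmem t).2 ⟨ht0, hta, le_trans htc (le_trans hcs.2.le
            ((hGmem s).1 hsG).2.2)⟩, fun h => absurd (h ▸ htc) (not_le.mpr (h ▸ hcs.2))⟩
      rw [this, ← finsum_Icc_eq_sum_filter hfin]
      exact abs_finsum_le_discNorm hfin ha hcs.1 (le_trans hcs.2.le
        (le_trans ((hGmem s).1 hsG).2.2 hbT))
  · -- u in the interval, s before it
    have hsa : s < a := by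
      by_contra hc
      exact hsG ((hGmem s).2 ⟨hs0, not_lt.mp hc, le_trans hsu.le ((hGmem u).1 huG).2.2⟩)
    have e1 : ∑ t ∈ G, η' t = ∑ t ∈ G \ {u}, η t := by
      rw [hη', Finset.sum_update_of_mem huG, zero_add]
      exact Finset.sum_congr rfl (fun t ht => by
        have hts : t ≠ s := fun h => hsG (h ▸ (Finset.mem_sdiff.mp ht).1)
        simp [Function.update_apply, hts])
    rw [e1]
    have hlt : ∀ t ∈ G \ {u}, u < t ∧ t ≤ b := by
      intro t ht
      rw [Finset.mem_sdiff, Finset.mem_singleton] at ht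
      obtain ⟨htG, htu⟩ := ht
      obtain ⟨ht0, hta, htb⟩ := (hGmem t).1 htG
      refine ⟨?_, htb⟩
      rcases lt_trichotomy t u with h | h | h
      · exact absurd (hmid t (lt_of_lt_of_le hsa hta) h) ht0
      · exact absurd h htu
      · exact h
    rcases Finset.eq_empty_or_nonempty (G \ {u}) with hemp | hnemp
    · rw [hemp, Finset.sum_empty, abs_zero]
      exact discNorm_nonneg' hT hfin
    · set c := (G \ {u}).min' hnemp with hc
      have hcmem := (G \ {u}).min'_mem hnemp
      have hcu : u < c ∧ c ≤ b := hlt c hcmem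
      have : G \ {u} = hfin.toFinset.filter (fun t => t ∈ Set.Icc c b) := by
        ext t
        simp only [Finset.mem_filter, Set.Finite.mem_toFinset, Function.mem_support,
          Set.mem_Icc]
        constructor
        · intro ht
          exact ⟨((hGmem t).1 (Finset.mem_sdiff.mp ht).1).1, Finset.min'_le _ t ht,
            (hlt t ht).2⟩
        · rintro ⟨ht0, htc, htb⟩
          rw [Finset.mem_sdiff, Finset.mem_singleton]
          exact ⟨(hGmem t).2 ⟨ht0, le_trans ((hGmem u).1 huG).2.1
            (le_trans hcu.1.le htc), htb⟩,
            fun h => absurd (h ▸ htc) (not_le.mpr (h ▸ hcu.1))⟩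
      rw [this, ← finsum_Icc_eq_sum_filter hfin]
      exact abs_finsum_le_discNorm hfin (le_trans humem.1 hcu.1.le) hcu.2 hbT
  · -- neither endpoint in the interval: nothing changes
    have e1 : ∑ t ∈ G, η' t = ∑ t ∈ G, η t :=
      Finset.sum_congr rfl (fun t ht =>
        hη'eq t (fun h => hsG (h ▸ ht)) (fun h => huG (h ▸ ht)))
    rw [e1, hG, ← finsum_Icc_eq_sum_filter hfin]
    exact abs_finsum_le_discNorm hfin ha hab hbT

private lemma steps_discNorm_le {T : ℝ} (hT : 0 ≤ T)
    {R : (ℝ → ℝ) → (ℝ → ℝ) → Prop}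
    (hR : ∀ x y, R x y → ∃ s u : ℝ, s < u ∧ x s + x u = 0 ∧ x s ≠ 0 ∧ x u ≠ 0 ∧
      (∀ t, s < t → t < u → x t = 0) ∧
      y = Function.update (Function.update x s 0) u 0) :
    ∀ n (η η' : ℝ → ℝ), IsEventSeq T η → StepsN R n η η' →
      discNorm T η' ≤ discNorm T η := by
  intro n
  induction n with
  | zero =>
    intro η η' _ h
    have : η = η' := h
    rw [this]
  | succ n ih =>
    rintro η η' hη ⟨y, hxy, hsteps⟩
    obtain ⟨s, u, hsu, hsum, hs0, hu0, hmid, rfl⟩ := hR _ _ hxy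
    have hy : IsEventSeq T (Function.update (Function.update η s 0) u 0) :=
      ⟨hη.1.subset (step_support_subset s u), (step_support_subset s u).trans hη.2⟩
    exact le_trans (ih _ _ hy hsteps)
      (step_discNorm_le hT hη hsu hsum hs0 hu0 hmid)

/-- transcription steps do not increase the discrepancy norm:
if `η'` is obtained from a ±1-valued event sequence `η` by `n` successive `(+−)`- or
`(−+)`-transcription steps, then `‖η'‖_D ≤ ‖η‖_D`. -/
theorem stmt5 (T : ℝ) (hT : 0 < T) (η η' : ℝ → ℝ)
    (hη : IsEventSeq T η) (hpm : IsPM η) (n : ℕ)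
    (h : StepsN StepPM n η η' ∨ StepsN StepMP n η η') :
    discNorm T η' ≤ discNorm T η := by
  rcases h with h | h
  · refine steps_discNorm_le hT.le (R := StepPM) ?_ n η η' hη h
    rintro x y ⟨s, u, hsu, hs, hu, hmid, rfl⟩
    exact ⟨s, u, hsu, by rw [hs, hu]; ring, by rw [hs]; norm_num,
      by rw [hu]; norm_num, fun t h1 h2 => hmid t h1 h2, rfl⟩
  · refine steps_discNorm_le hT.le (R := StepMP) ?_ n η η' hη h
    rintro x y ⟨s, u, hsu, hs, hu, hmid, rfl⟩
    exact ⟨s, u, hsu, by rw [hs, hu]; ring, by rw [hs]; norm_num,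
      by rw [hu]; norm_num, fun t h1 h2 => hmid t h1 h2, rfl⟩
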